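/- Let λ ≥ 1, 0 < ρ ≤ 1, N a positive integer with N ≥ n, and suppose K : R^n → C satisfies |K(x)| ≤ ρ λ^{n-1} (1+λ|x|)^{-(n-1)/2}(1+ρ|x|)^{-N} for all x. Then for every x ∈ [-1/2,1/2]^n, Σ_{k ∈ Z^n \ {0}} |K(x+k)| ≲ (λ/ρ)^{(n-1)/2}, with implicit constant depending only on n. -/
import Mathlib

noncomputable def eNormR {n : ℕ} (x : Fin n → ℝ) : ℝ := Real.sqrt (∑ i, (x i) ^ 2)

open Real Finset


lemma bern_head {γ t : ℝ} (hγ0 : 0 < γ) (hγ1 : γ ≤ 1) (ht : 1 ≤ t) :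
    γ * t ^ (γ - 1) ≤ t ^ γ - (t - 1) ^ γ := by
  have ht0 : 0 < t := lt_of_lt_of_le one_pos ht
  have h1t : 1 / t ≤ 1 := by rw [div_le_one ht0]; exact ht
  have hfac : t - 1 = t * (1 - 1 / t) := by field_simp
  have hmul : (t - 1) ^ γ = t ^ γ * (1 - 1 / t) ^ γ := by
    rw [hfac, Real.mul_rpow ht0.le (by linarith)]
  have hbern : (1 - 1 / t) ^ γ ≤ 1 - γ / t := by
    have h := rpow_one_add_le_one_add_mul_self (s := -(1/t)) (by linarith) hγ0.le hγ1
    have e1 : (1 : ℝ) + -(1/t) = 1 - 1/t := by ring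
    have e2 : (1 : ℝ) + γ * (-(1/t)) = 1 - γ / t := by ring
    rw [e1, e2] at h; exact h
  have htγ : 0 < t ^ γ := Real.rpow_pos_of_pos ht0 γ
  have h2 : (t - 1) ^ γ ≤ t ^ γ * (1 - γ / t) := by
    rw [hmul]
    exact mul_le_mul_of_nonneg_left hbern htγ.le
  have h3 : t ^ γ * (γ / t) = γ * t ^ (γ - 1) := by
    rw [Real.rpow_sub ht0, Real.rpow_one]; ring
  nlinarith [htγ]

lemma bern_tail {β t : ℝ} (hβ0 : 0 < β) (hβ1 : β ≤ 1) (ht : 2 ≤ t) :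
    β * t ^ (-1 - β) ≤ (t - 1) ^ (-β) - t ^ (-β) := by
  have ht0 : 0 < t := by linarith
  have ht1 : 0 < t - 1 := by linarith
  have h1t : 0 < 1 - 1 / t := by
    rw [sub_pos, div_lt_one ht0]; linarith
  have hfac : t - 1 = t * (1 - 1 / t) := by field_simp
  have hmul : (t - 1) ^ (-β) = t ^ (-β) * (1 - 1 / t) ^ (-β) := by
    rw [hfac, Real.mul_rpow ht0.le h1t.le]
  have hbern : (1 - 1 / t) ^ β ≤ 1 - β / t := by
    have h := rpow_one_add_le_one_add_mul_self (s := -(1/t))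
      (by rw [neg_le, neg_neg]; linarith [div_le_one ht0 |>.mpr (by linarith : t ≥ 1)]) hβ0.le hβ1
    have e1 : (1 : ℝ) + -(1/t) = 1 - 1/t := by ring
    have e2 : (1 : ℝ) + β * (-(1/t)) = 1 - β / t := by ring
    rw [e1, e2] at h; exact h
  have hp : 0 < (1 - 1/t) ^ β := Real.rpow_pos_of_pos h1t β
  have hβt : 0 < β / t := by positivity
  have hinv : (1 : ℝ) + β / t ≤ (1 - 1 / t) ^ (-β) := by
    have h2 : (1 + β/t) * ((1 - 1/t) ^ β) ≤ 1 := by nlinarith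
    rw [Real.rpow_neg h1t.le, ← one_div, le_div_iff₀ hp]
    exact h2
  have htβ : 0 < t ^ (-β) := Real.rpow_pos_of_pos ht0 _
  have h3 : t ^ (-β) * (β / t) = β * t ^ (-1 - β) := by
    rw [show (-1 - β : ℝ) = -β - 1 by ring, Real.rpow_sub ht0, Real.rpow_one]; ring
  nlinarith [mul_le_mul_of_nonneg_left hinv htβ.le]

lemma nat_sum_bound {β ρ : ℝ} (hβ1 : 1/4 ≤ β) (hβ2 : β ≤ 1/2)
    (hρ : 0 < ρ) (hρ1 : ρ ≤ 1) (T : Finset ℕ) :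
    ∑ m ∈ T, (1 + (m:ℝ)) ^ (-β) * (1 + ρ * m / 2) ^ (-(1:ℝ)) ≤ 13 * ρ ^ (β - 1) := by
  set g : ℕ → ℝ := fun m => (1 + (m:ℝ)) ^ (-β) * (1 + ρ * m / 2) ^ (-(1:ℝ)) with hg
  have hβ0 : 0 < β := by linarith
  have hβlt : β < 1 := by linarith
  set γ := 1 - β with hγ
  have hγ0 : 0 < γ := by simp [hγ]; linarith
  have hγ1 : γ ≤ 1 := by simp [hγ]; linarith
  have hγhalf : 1/2 ≤ γ := by simp [hγ]; linarith
  have hgnn : ∀ m, 0 ≤ g m := fun m => by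
    apply mul_nonneg <;> apply Real.rpow_nonneg <;> positivity
  set M := ⌈1/ρ⌉₊ with hM
  have hρinv : (1:ℝ) ≤ 1/ρ := by rw [le_div_iff₀ hρ]; linarith
  have hM1 : 1 ≤ M := by
    rw [hM, Nat.one_le_ceil_iff]; positivity
  have hMge : 1/ρ ≤ (M:ℝ) := Nat.le_ceil _
  have hMle : (M:ℝ) ≤ 2/ρ := by
    have := Nat.ceil_lt_add_one (a := 1/ρ) (by positivity)
    have : (M:ℝ) ≤ 1/ρ + 1 := le_of_lt (by rw [hM]; exact this)
    have h2 : 1/ρ + 1 ≤ 2/ρ := by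
      have e : 2/ρ = 1/ρ + 1/ρ := by ring
      linarith [hρinv, e]
    linarith
  set L := max (T.sup id) M with hL
  have hML : M ≤ L := le_max_right _ _
  have hTsub : T ⊆ range (L + 1) := by
    intro m hm
    rw [mem_range, Nat.lt_succ_iff]
    exact le_trans (le_sup (f := id) hm) (le_max_left _ _)
  have h1 : ∑ m ∈ T, g m ≤ ∑ m ∈ range (L+1), g m :=
    sum_le_sum_of_subset_of_nonneg hTsub (fun m _ _ => hgnn m)
  rw [Finset.sum_range_succ'] at h1
  have hg0 : g 0 = 1 := by simp [hg]
  -- split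
  have hsplit : ∑ i ∈ range L, g (i+1)
      = ∑ i ∈ range M, g (i+1) + ∑ i ∈ Ico M L, g (i+1) :=
    (Finset.sum_range_add_sum_Ico _ hML).symm
  -- piece A
  have hA : ∑ i ∈ range M, g (i+1) ≤ γ⁻¹ * (M:ℝ) ^ γ := by
    have hterm : ∀ i : ℕ, g (i+1) ≤ γ⁻¹ * (((i+1:ℕ):ℝ) ^ γ - ((i:ℕ):ℝ) ^ γ) := by
      intro i
      have ht : (1:ℝ) ≤ ((i:ℝ)+1) := by have := Nat.cast_nonneg (α:=ℝ) i; linarith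
      have hb := bern_head hγ0 hγ1 ht
      have e : ((i:ℝ)+1) - 1 = (i:ℝ) := by ring
      have hexp : γ - 1 = -β := by rw [hγ]; ring
      rw [e, hexp] at hb
      have hgi : (1 + ((i:ℝ)+1)) ^ (-β) * (1 + ρ * ((i:ℝ)+1) / 2) ^ (-(1:ℝ))
          ≤ ((i:ℝ)+1) ^ (-β) := by
        have h1 : ((1:ℝ) + ((i:ℝ)+1)) ^ (-β) ≤ ((i:ℝ)+1) ^ (-β) :=
          Real.rpow_le_rpow_of_nonpos (by positivity) (by linarith) (by linarith)
        have h2 : ((1:ℝ) + ρ * ((i:ℝ)+1) / 2) ^ (-(1:ℝ)) ≤ 1 := by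
          apply Real.rpow_le_one_of_one_le_of_nonpos _ (by linarith)
          have : (0:ℝ) ≤ ρ * ((i:ℝ)+1) / 2 := by positivity
          linarith
        calc (1 + ((i:ℝ)+1)) ^ (-β) * (1 + ρ * ((i:ℝ)+1) / 2) ^ (-(1:ℝ))
            ≤ ((i:ℝ)+1) ^ (-β) * 1 :=
              mul_le_mul h1 h2 (Real.rpow_nonneg (by positivity) _)
                (Real.rpow_nonneg (by positivity) _)
          _ = ((i:ℝ)+1) ^ (-β) := by ring
      have h4 := mul_le_mul_of_nonneg_left hb (inv_nonneg.mpr hγ0.le)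
      rw [← mul_assoc, inv_mul_cancel₀ (ne_of_gt hγ0), one_mul] at h4
      have egoal : g (i+1) = (1 + ((i:ℝ)+1)) ^ (-β) * (1 + ρ * ((i:ℝ)+1) / 2) ^ (-(1:ℝ)) := by
        simp only [hg]; push_cast; ring_nf
      rw [egoal]; push_cast
      exact le_trans hgi h4
    calc ∑ i ∈ range M, g (i+1)
        ≤ ∑ i ∈ range M, γ⁻¹ * (((i+1:ℕ):ℝ) ^ γ - ((i:ℕ):ℝ) ^ γ) := sum_le_sum (fun i _ => hterm i)
      _ = γ⁻¹ * ∑ i ∈ range M, ((fun j : ℕ => ((j:ℝ)) ^ γ) (i+1) - (fun j : ℕ => ((j:ℝ)) ^ γ) i) := by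
          rw [← mul_sum]
      _ = γ⁻¹ * (((M:ℝ)) ^ γ - ((0:ℕ):ℝ) ^ γ) := by
          rw [Finset.sum_range_sub (fun j : ℕ => ((j:ℝ)) ^ γ)]
      _ = γ⁻¹ * (M:ℝ) ^ γ := by
          norm_num [Real.zero_rpow (ne_of_gt hγ0)]
  -- piece B
  set p : ℕ → ℝ := fun j => ((j:ℝ)) ^ (-β) with hp
  have hB : ∑ i ∈ Ico M L, g (i+1) ≤ (2/ρ) * β⁻¹ * (M:ℝ) ^ (-β) := by
    have hterm : ∀ i : ℕ, 1 ≤ i → g (i+1) ≤ (2/ρ) * β⁻¹ * (p i - p (i+1)) := by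
      intro i hi
      have hi1 : (1:ℝ) ≤ (i:ℝ) := by exact_mod_cast hi
      have ht : (2:ℝ) ≤ ((i:ℝ)+1) := by linarith
      have hb := bern_tail hβ0 (by linarith) ht
      have e : ((i:ℝ)+1) - 1 = (i:ℝ) := by ring
      rw [e] at hb
      have hgi : g (i+1) ≤ (2/ρ) * ((i:ℝ)+1) ^ (-1-β) := by
        have h1 : ((1:ℝ) + ((i:ℝ)+1)) ^ (-β) ≤ ((i:ℝ)+1) ^ (-β) :=
          Real.rpow_le_rpow_of_nonpos (by positivity) (by linarith) (by linarith)
        have h2 : ((1:ℝ) + ρ * ((i:ℝ)+1) / 2) ^ (-(1:ℝ)) ≤ (ρ * ((i:ℝ)+1) / 2) ^ (-(1:ℝ)) := by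
          apply Real.rpow_le_rpow_of_nonpos (by positivity) (by linarith) (by norm_num)
        have h3 : (ρ * ((i:ℝ)+1) / 2) ^ (-(1:ℝ)) = 2 / (ρ * ((i:ℝ)+1)) := by
          rw [show (-(1:ℝ)) = -1 from rfl, Real.rpow_neg_one, inv_div]
        have egoal : g (i+1) = (1 + ((i:ℝ)+1)) ^ (-β) * (1 + ρ * ((i:ℝ)+1) / 2) ^ (-(1:ℝ)) := by
          simp only [hg]; push_cast; ring_nf
        have hcomb : g (i+1) ≤ ((i:ℝ)+1) ^ (-β) * (2 / (ρ * ((i:ℝ)+1))) := by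
          rw [egoal, ← h3]
          exact mul_le_mul h1 h2 (Real.rpow_nonneg (by positivity) _)
            (Real.rpow_nonneg (by positivity) _)
        have hid : ((i:ℝ)+1) ^ (-β) * (2 / (ρ * ((i:ℝ)+1))) = (2/ρ) * ((i:ℝ)+1) ^ (-1-β) := by
          rw [show (-1-β:ℝ) = -β - 1 by ring, Real.rpow_sub (by positivity), Real.rpow_one]
          field_simp
        rw [hid] at hcomb; exact hcomb
      have h5 : ((i:ℝ)+1) ^ (-1-β) ≤ β⁻¹ * (p i - p (i+1)) := by
        have h6 := mul_le_mul_of_nonneg_left hb (inv_nonneg.mpr hβ0.le)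
        rw [← mul_assoc, inv_mul_cancel₀ (ne_of_gt hβ0), one_mul] at h6
        simp only [hp]; push_cast
        exact h6
      calc g (i+1) ≤ (2/ρ) * ((i:ℝ)+1) ^ (-1-β) := hgi
        _ ≤ (2/ρ) * (β⁻¹ * (p i - p (i+1))) :=
            mul_le_mul_of_nonneg_left h5 (by positivity)
        _ = (2/ρ) * β⁻¹ * (p i - p (i+1)) := by ring
    have htel : ∑ i ∈ Ico M L, (p i - p (i+1)) = p M - p L := by
      rw [Finset.sum_Ico_eq_sum_range]
      have : ∀ k, p (M + k) - p (M + k + 1) = (fun k => p (M + k)) k - (fun k => p (M + k)) (k+1) := by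
        intro k; simp [Nat.add_assoc]
      simp_rw [this]
      rw [Finset.sum_range_sub' (fun k => p (M + k))]
      congr 2
      omega
    calc ∑ i ∈ Ico M L, g (i+1)
        ≤ ∑ i ∈ Ico M L, (2/ρ) * β⁻¹ * (p i - p (i+1)) := by
          apply sum_le_sum
          intro i hi
          exact hterm i (le_trans hM1 (mem_Ico.mp hi).1)
      _ = (2/ρ) * β⁻¹ * (p M - p L) := by rw [← mul_sum, htel]
      _ ≤ (2/ρ) * β⁻¹ * (M:ℝ) ^ (-β) := by
          apply mul_le_mul_of_nonneg_left _ (by positivity)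
          have : 0 ≤ p L := Real.rpow_nonneg (Nat.cast_nonneg L) _
          simp only [hp]; linarith
  -- numeric bounds
  have hMnn : (0:ℝ) ≤ (M:ℝ) := Nat.cast_nonneg M
  have hρβ1 : (0:ℝ) ≤ ρ ^ (β-1) := Real.rpow_nonneg hρ.le _
  have hMγ : (M:ℝ) ^ γ ≤ 2 * ρ ^ (β-1) := by
    calc (M:ℝ) ^ γ ≤ (2/ρ) ^ γ := Real.rpow_le_rpow hMnn hMle hγ0.le
      _ = 2 ^ γ / ρ ^ γ := Real.div_rpow (by norm_num) hρ.le γ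
      _ ≤ 2 / ρ ^ γ := by
          have h2γ : (2:ℝ) ^ γ ≤ 2 := by
            calc (2:ℝ) ^ γ ≤ (2:ℝ) ^ (1:ℝ) :=
                Real.rpow_le_rpow_of_exponent_le one_le_two hγ1
              _ = 2 := Real.rpow_one 2
          gcongr
      _ = 2 * ρ ^ (β-1) := by
          rw [show β - 1 = -γ by rw [hγ]; ring, Real.rpow_neg hρ.le]
          ring
  have hMβ : (M:ℝ) ^ (-β) ≤ ρ ^ β := by
    have h := Real.rpow_le_rpow_of_nonpos (by positivity : (0:ℝ) < 1/ρ) hMge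
      (neg_nonpos.mpr hβ0.le)
    calc (M:ℝ) ^ (-β) ≤ (1/ρ) ^ (-β) := h
      _ = ρ ^ β := by
          rw [one_div, Real.inv_rpow hρ.le, Real.rpow_neg hρ.le, inv_inv]
  have h0 : (1:ℝ) ≤ ρ ^ (β-1) :=
    Real.one_le_rpow_of_pos_of_le_one_of_nonpos hρ hρ1 (by linarith)
  have hγinv : γ⁻¹ ≤ 2 := by
    rw [show (2:ℝ) = (1/2)⁻¹ by norm_num]
    exact inv_anti₀ (by norm_num) hγhalf
  have hβinv : β⁻¹ ≤ 4 := by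
    rw [show (4:ℝ) = (1/4)⁻¹ by norm_num]
    exact inv_anti₀ (by norm_num) hβ1
  have eρ : ρ ^ β / ρ = ρ ^ (β - 1) := by
    rw [Real.rpow_sub hρ, Real.rpow_one]
  have hAfin : γ⁻¹ * (M:ℝ) ^ γ ≤ 4 * ρ ^ (β-1) := by
    calc γ⁻¹ * (M:ℝ) ^ γ ≤ 2 * (2 * ρ ^ (β-1)) := by
          apply mul_le_mul hγinv hMγ (Real.rpow_nonneg hMnn _) (by norm_num)
      _ = 4 * ρ ^ (β-1) := by ring
  have hBfin : (2/ρ) * β⁻¹ * (M:ℝ) ^ (-β) ≤ 8 * ρ ^ (β-1) := by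
    have h1 : (2/ρ) * β⁻¹ * (M:ℝ) ^ (-β) ≤ (2/ρ) * 4 * ρ ^ β := by
      have := mul_le_mul (mul_le_mul_of_nonneg_left hβinv (by positivity : (0:ℝ) ≤ 2/ρ))
        hMβ (Real.rpow_nonneg hMnn _) (by positivity)
      exact this
    have h2 : (2/ρ) * 4 * ρ ^ β = 8 * (ρ ^ β / ρ) := by ring
    rw [h2, eρ] at h1
    exact h1
  -- combine
  have hfin : ∑ m ∈ T, g m ≤ 1 + (γ⁻¹ * (M:ℝ) ^ γ + (2/ρ) * β⁻¹ * (M:ℝ) ^ (-β)) := by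
    rw [hg0] at h1
    rw [hsplit] at h1
    linarith [hA, hB, h1]
  calc ∑ m ∈ T, g m ≤ 1 + (γ⁻¹ * (M:ℝ) ^ γ + (2/ρ) * β⁻¹ * (M:ℝ) ^ (-β)) := hfin
    _ ≤ ρ ^ (β-1) + (4 * ρ ^ (β-1) + 8 * ρ ^ (β-1)) := by linarith [hAfin, hBfin, h0]
    _ = 13 * ρ ^ (β-1) := by ring

lemma int_sum_bound {β ρ : ℝ} (hβ1 : 1/4 ≤ β) (hβ2 : β ≤ 1/2)
    (hρ : 0 < ρ) (hρ1 : ρ ≤ 1) (T : Finset ℤ) :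
    ∑ a ∈ T, (1 + |(a:ℝ)|) ^ (-β) * (1 + ρ * |(a:ℝ)| / 2) ^ (-(1:ℝ)) ≤ 26 * ρ ^ (β - 1) := by
  set g : ℕ → ℝ := fun m => (1 + (m:ℝ)) ^ (-β) * (1 + ρ * m / 2) ^ (-(1:ℝ)) with hg
  have hgnn : ∀ m, 0 ≤ g m := fun m => by
    apply mul_nonneg <;> apply Real.rpow_nonneg <;> positivity
  have habs : ∀ a : ℤ, (1 + |(a:ℝ)|) ^ (-β) * (1 + ρ * |(a:ℝ)| / 2) ^ (-(1:ℝ)) = g a.natAbs := by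
    intro a
    have : |(a:ℝ)| = ((a.natAbs : ℕ) : ℝ) := by
      rw [Nat.cast_natAbs]
      push_cast; ring
    rw [this]
  calc ∑ a ∈ T, (1 + |(a:ℝ)|) ^ (-β) * (1 + ρ * |(a:ℝ)| / 2) ^ (-(1:ℝ))
      = ∑ a ∈ T, g a.natAbs := by exact Finset.sum_congr rfl (fun a _ => habs a)
    _ = ∑ b ∈ T.image Int.natAbs, (Finset.filter (fun a => Int.natAbs a = b) T).card • g b :=
        Finset.sum_comp g Int.natAbs
    _ ≤ ∑ b ∈ T.image Int.natAbs, 2 * g b := by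
        apply Finset.sum_le_sum
        intro b _
        have hcard : (Finset.filter (fun a => Int.natAbs a = b) T).card ≤ 2 := by
          have hsub : Finset.filter (fun a => Int.natAbs a = b) T ⊆ {(b:ℤ), -(b:ℤ)} := by
            intro a ha
            have := (Finset.mem_filter.mp ha).2
            rcases Int.natAbs_eq_iff.mp this with h | h
            · simp [h]
            · simp [h]
          calc (Finset.filter (fun a => Int.natAbs a = b) T).card
              ≤ ({(b:ℤ), -(b:ℤ)} : Finset ℤ).card := Finset.card_le_card hsub
            _ ≤ 2 := Finset.card_insert_le _ _ |>.trans (by simp)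
        calc (Finset.filter (fun a => Int.natAbs a = b) T).card • g b
            = ((Finset.filter (fun a => Int.natAbs a = b) T).card : ℝ) * g b := by
              rw [nsmul_eq_mul]
          _ ≤ 2 * g b := by
              apply mul_le_mul_of_nonneg_right _ (hgnn b)
              exact_mod_cast hcard
    _ = 2 * ∑ b ∈ T.image Int.natAbs, g b := by rw [Finset.mul_sum]
    _ ≤ 2 * (13 * ρ ^ (β - 1)) := by
        apply mul_le_mul_of_nonneg_left _ (by norm_num)
        exact nat_sum_bound hβ1 hβ2 hρ hρ1 _
    _ = 26 * ρ ^ (β - 1) := by ring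

lemma term_bound {n : ℕ} (hn : 2 ≤ n) {lam ρ : ℝ} {N : ℕ} {K : (Fin n → ℝ) → ℂ}
    (hlam : 1 ≤ lam) (hρ : 0 < ρ) (hN : n ≤ N)
    (hK : ∀ y : Fin n → ℝ, ‖K y‖ ≤
        ρ * lam ^ (n - 1) * (1 + lam * eNormR y) ^ (-(((n:ℝ) - 1) / 2)) *
          (1 + ρ * eNormR y) ^ (-(N:ℝ)))
    (x : Fin n → ℝ) (hx : ∀ i, |x i| ≤ 1/2) (k : Fin n → ℤ) (hk : k ≠ 0) :
    ‖K (fun i => x i + (k i : ℝ))‖ ≤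
      (4:ℝ) ^ (((n:ℝ)-1)/2) * (ρ * lam ^ (((n:ℝ)-1)/2)) *
        ∏ i, ((1 + |((k i : ℤ):ℝ)|) ^ (-(((n:ℝ)-1)/(2*(n:ℝ)))) *
          (1 + ρ * |((k i : ℤ):ℝ)| / 2) ^ (-(1:ℝ))) := by
  set β : ℝ := ((n:ℝ)-1)/(2*(n:ℝ)) with hβdef
  set δ : ℝ := ((n:ℝ)-1)/2 with hδdef
  have hn2 : (2:ℝ) ≤ (n:ℝ) := by exact_mod_cast hn
  have hnpos : (0:ℝ) < (n:ℝ) := by linarith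
  have hβ0 : 0 < β := by rw [hβdef]; apply div_pos <;> linarith
  have hδ0 : 0 < δ := by rw [hδdef]; apply div_pos <;> linarith
  have hβn : β * (n:ℝ) = δ := by rw [hβdef, hδdef]; field_simp
  set y : Fin n → ℝ := fun i => x i + (k i : ℝ) with hy
  set r : ℝ := eNormR y with hr
  have hrnn : 0 ≤ r := Real.sqrt_nonneg _
  have hr_abs : ∀ i, |y i| ≤ r := by
    intro i
    rw [hr]
    unfold eNormR
    rw [← Real.sqrt_sq_eq_abs]
    exact Real.sqrt_le_sqrt (Finset.single_le_sum (f := fun j => (y j)^2)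
      (fun j _ => sq_nonneg _) (Finset.mem_univ i))
  have hky : ∀ i, |((k i : ℤ):ℝ)| ≤ 2 * |y i| := by
    intro i
    by_cases h : k i = 0
    · simp [h]
    · have h1 : (1:ℝ) ≤ |((k i : ℤ):ℝ)| := by
        have := Int.one_le_abs h
        exact_mod_cast this
      have h2 : |((k i : ℤ):ℝ)| ≤ |y i| + |x i| := by
        have e : ((k i : ℤ):ℝ) = y i + (- x i) := by rw [hy]; ring
        rw [e]
        exact (abs_add_le _ _).trans (by rw [abs_neg])
      have := hx i
      linarith
  have hr_half : 1/2 ≤ r := by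
    obtain ⟨i0, hi0⟩ := Function.ne_iff.mp hk
    have h1 : (1:ℝ) ≤ |((k i0 : ℤ):ℝ)| := by
      have := Int.one_le_abs hi0
      exact_mod_cast this
    have := hky i0
    have := hr_abs i0
    linarith
  have hrpos : 0 < r := by linarith
  have hrk : ∀ i, (1 + |((k i : ℤ):ℝ)|)/4 ≤ r := by
    intro i
    have := hky i
    have := hr_abs i
    linarith
  -- bound the N-factor
  have hb1 : (1 + ρ * r) ^ (-(N:ℝ)) ≤ ∏ i, (1 + ρ * |((k i : ℤ):ℝ)| / 2) ^ (-(1:ℝ)) := by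
    have hbase1 : (1:ℝ) ≤ 1 + ρ * r := by nlinarith
    have step1 : (1 + ρ * r) ^ (-(N:ℝ)) ≤ (1 + ρ * r) ^ (-(n:ℝ)) := by
      apply Real.rpow_le_rpow_of_exponent_le hbase1
      have : (n:ℝ) ≤ (N:ℝ) := by exact_mod_cast hN
      linarith
    have step2 : (1 + ρ * r) ^ (-(n:ℝ)) = ∏ _i : Fin n, (1 + ρ * r) ^ (-(1:ℝ)) := by
      rw [Finset.prod_const, Finset.card_univ, Fintype.card_fin]
      rw [← Real.rpow_natCast ((1 + ρ * r) ^ (-(1:ℝ))) n, ← Real.rpow_mul (by linarith)]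
      norm_num
    have step3 : ∏ _i : Fin n, (1 + ρ * r) ^ (-(1:ℝ))
        ≤ ∏ i, (1 + ρ * |((k i : ℤ):ℝ)| / 2) ^ (-(1:ℝ)) := by
      apply Finset.prod_le_prod
      · intro i _; exact Real.rpow_nonneg (by positivity) _
      · intro i _
        apply Real.rpow_le_rpow_of_nonpos (by positivity)
        · have h1 := hky i
          have h2 := hr_abs i
          nlinarith
        · norm_num
    calc (1 + ρ * r) ^ (-(N:ℝ)) ≤ (1 + ρ * r) ^ (-(n:ℝ)) := step1
      _ = ∏ _i : Fin n, (1 + ρ * r) ^ (-(1:ℝ)) := step2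
      _ ≤ _ := step3
  -- bound the lam-factor
  have hb2 : (1 + lam * r) ^ (-δ) ≤ (4:ℝ)^δ * lam ^ (-δ) * ∏ i, (1 + |((k i : ℤ):ℝ)|) ^ (-β) := by
    have hlr : 0 < lam * r := by positivity
    have step1 : (1 + lam * r) ^ (-δ) ≤ (lam * r) ^ (-δ) :=
      Real.rpow_le_rpow_of_nonpos hlr (by linarith) (by linarith)
    have step2 : (lam * r) ^ (-δ) = lam ^ (-δ) * r ^ (-δ) :=
      Real.mul_rpow (by linarith) hrnn
    have step3 : r ^ (-δ) = ∏ _i : Fin n, r ^ (-β) := by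
      rw [Finset.prod_const, Finset.card_univ, Fintype.card_fin]
      rw [← Real.rpow_natCast (r ^ (-β)) n, ← Real.rpow_mul hrnn]
      congr 1
      rw [show -β * (n:ℝ) = -(β * (n:ℝ)) by ring, hβn]
    have step4 : ∏ _i : Fin n, r ^ (-β) ≤ ∏ i, ((1 + |((k i : ℤ):ℝ)|)/4) ^ (-β) := by
      apply Finset.prod_le_prod
      · intro i _; exact Real.rpow_nonneg hrnn _
      · intro i _
        exact Real.rpow_le_rpow_of_nonpos (by positivity) (hrk i) (by linarith)
    have step5 : ∏ i, ((1 + |((k i : ℤ):ℝ)|)/4) ^ (-β)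
        = (4:ℝ)^δ * ∏ i, (1 + |((k i : ℤ):ℝ)|) ^ (-β) := by
      have e1 : ∀ i : Fin n, ((1 + |((k i : ℤ):ℝ)|)/4) ^ (-β)
          = (4:ℝ)^β * (1 + |((k i : ℤ):ℝ)|) ^ (-β) := by
        intro i
        rw [Real.div_rpow (by positivity) (by norm_num)]
        rw [Real.rpow_neg (by norm_num : (0:ℝ) ≤ 4)]
        rw [div_eq_mul_inv, inv_inv]
        ring
      rw [Finset.prod_congr rfl (fun i _ => e1 i), Finset.prod_mul_distrib,
        Finset.prod_const, Finset.card_univ, Fintype.card_fin]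
      congr 1
      rw [← Real.rpow_natCast ((4:ℝ)^β) n, ← Real.rpow_mul (by norm_num), hβn]
    calc (1 + lam * r) ^ (-δ) ≤ (lam * r) ^ (-δ) := step1
      _ = lam ^ (-δ) * r ^ (-δ) := step2
      _ = lam ^ (-δ) * ∏ _i : Fin n, r ^ (-β) := by rw [step3]
      _ ≤ lam ^ (-δ) * ∏ i, ((1 + |((k i : ℤ):ℝ)|)/4) ^ (-β) :=
          mul_le_mul_of_nonneg_left step4 (Real.rpow_nonneg (by linarith) _)
      _ = lam ^ (-δ) * ((4:ℝ)^δ * ∏ i, (1 + |((k i : ℤ):ℝ)|) ^ (-β)) := by rw [step5]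
      _ = (4:ℝ)^δ * lam ^ (-δ) * ∏ i, (1 + |((k i : ℤ):ℝ)|) ^ (-β) := by ring
  -- power identity
  have hlam0 : (0:ℝ) < lam := by linarith
  have hlam2 : lam ^ (n-1) * lam ^ (-δ) = lam ^ δ := by
    have e1 : lam ^ (n-1) = lam ^ (((n:ℝ)) - 1) := by
      rw [← Real.rpow_natCast lam (n-1)]
      congr 1
      have : (1:ℕ) ≤ n := by omega
      push_cast [Nat.cast_sub this]
      ring
    rw [e1, ← Real.rpow_add hlam0]
    congr 1
    rw [hδdef]; ring
  -- combine
  have hKy := hK y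
  have hPnn : (0:ℝ) ≤ ∏ i, (1 + ρ * |((k i : ℤ):ℝ)| / 2) ^ (-(1:ℝ)) :=
    Finset.prod_nonneg (fun i _ => Real.rpow_nonneg (by positivity) _)
  calc ‖K (fun i => x i + (k i : ℝ))‖
      ≤ ρ * lam ^ (n - 1) * (1 + lam * r) ^ (-δ) * (1 + ρ * r) ^ (-(N:ℝ)) := hKy
    _ ≤ ρ * lam ^ (n - 1) * ((4:ℝ)^δ * lam ^ (-δ) * ∏ i, (1 + |((k i : ℤ):ℝ)|) ^ (-β))
          * (∏ i, (1 + ρ * |((k i : ℤ):ℝ)| / 2) ^ (-(1:ℝ))) := by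
        apply mul_le_mul _ hb1 (Real.rpow_nonneg (by positivity) _) _
        · exact mul_le_mul_of_nonneg_left hb2 (by positivity)
        · have : (0:ℝ) ≤ ρ * lam ^ (n-1) := by positivity
          apply mul_nonneg this
          apply mul_nonneg (mul_nonneg (Real.rpow_nonneg (by norm_num) _)
            (Real.rpow_nonneg (by linarith) _))
          exact Finset.prod_nonneg (fun i _ => Real.rpow_nonneg (by positivity) _)
    _ = (4:ℝ)^δ * (ρ * (lam ^ (n-1) * lam ^ (-δ))) *
          ((∏ i, (1 + |((k i : ℤ):ℝ)|) ^ (-β)) *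
            (∏ i, (1 + ρ * |((k i : ℤ):ℝ)| / 2) ^ (-(1:ℝ)))) := by ring
    _ = (4:ℝ)^δ * (ρ * lam ^ δ) *
          ∏ i, ((1 + |((k i : ℤ):ℝ)|) ^ (-β) * (1 + ρ * |((k i : ℤ):ℝ)| / 2) ^ (-(1:ℝ))) := by
        rw [hlam2, ← Finset.prod_mul_distrib]


theorem stmt19 (n : ℕ) (hn : 2 ≤ n) :
    ∃ C > (0:ℝ), ∀ (lam ρ : ℝ) (N : ℕ) (K : (Fin n → ℝ) → ℂ),
      1 ≤ lam → 0 < ρ → ρ ≤ 1 → n ≤ N →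
      (∀ y : Fin n → ℝ, ‖K y‖ ≤
        ρ * lam ^ (n - 1) * (1 + lam * eNormR y) ^ (-(((n:ℝ) - 1) / 2)) *
          (1 + ρ * eNormR y) ^ (-(N:ℝ))) →
      ∀ x : Fin n → ℝ, (∀ i, |x i| ≤ 1/2) →
        (∑' k : {k : Fin n → ℤ // k ≠ 0}, ‖K (fun i => x i + (k.1 i : ℝ))‖) ≤
          C * (lam / ρ) ^ (((n:ℝ) - 1) / 2) := by
  classical
  refine ⟨(4:ℝ) ^ (((n:ℝ)-1)/2) * 26 ^ n, by positivity, ?_⟩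
  intro lam ρ N K hlam hρ hρ1 hN hK x hx
  set β : ℝ := ((n:ℝ)-1)/(2*(n:ℝ)) with hβdef
  set δ : ℝ := ((n:ℝ)-1)/2 with hδdef
  have hn2 : (2:ℝ) ≤ (n:ℝ) := by exact_mod_cast hn
  have hβ1 : 1/4 ≤ β := by
    rw [hβdef, div_le_div_iff₀ (by norm_num) (by positivity)]
    nlinarith
  have hβ2 : β ≤ 1/2 := by
    rw [hβdef, div_le_div_iff₀ (by positivity) (by norm_num)]
    nlinarith
  have hβn : β * (n:ℝ) = δ := by rw [hβdef, hδdef]; field_simp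
  have hlam0 : (0:ℝ) < lam := by linarith
  set h : ℤ → ℝ := fun a => (1 + |(a:ℝ)|) ^ (-β) * (1 + ρ * |(a:ℝ)| / 2) ^ (-(1:ℝ)) with hh
  have hhnn : ∀ a, 0 ≤ h a := fun a =>
    mul_nonneg (Real.rpow_nonneg (by positivity) _) (Real.rpow_nonneg (by positivity) _)
  set A : ℝ := (4:ℝ) ^ δ * (ρ * lam ^ δ) with hA
  have hAnn : 0 ≤ A := by
    apply mul_nonneg (Real.rpow_nonneg (by norm_num) _)
    exact mul_nonneg hρ.le (Real.rpow_nonneg hlam0.le _)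
  apply tsum_le_of_sum_le'
  · apply mul_nonneg (by positivity)
    exact Real.rpow_nonneg (div_nonneg hlam0.le hρ.le) _
  intro S
  set S' : Finset (Fin n → ℤ) := S.image Subtype.val with hS'
  have step1 : ∑ s ∈ S, ‖K (fun i => x i + ((s:{k : Fin n → ℤ // k ≠ 0}).1 i : ℝ))‖
      ≤ ∑ s ∈ S, A * ∏ i, h ((s:{k : Fin n → ℤ // k ≠ 0}).1 i) := by
    apply Finset.sum_le_sum
    intro s _
    exact term_bound hn hlam hρ hN hK x hx s.1 s.2
  have step2 : ∑ s ∈ S, A * ∏ i, h ((s:{k : Fin n → ℤ // k ≠ 0}).1 i)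
      = A * ∑ k ∈ S', ∏ i, h (k i) := by
    rw [hS', Finset.sum_image (fun a _ b _ hab => Subtype.ext hab), ← Finset.mul_sum]
  set t : Fin n → Finset ℤ := fun i => S'.image (fun k => k i) with ht
  have hsub : S' ⊆ Fintype.piFinset t := by
    intro k hk
    rw [Fintype.mem_piFinset]
    intro i
    exact Finset.mem_image_of_mem _ hk
  have step3 : ∑ k ∈ S', ∏ i, h (k i) ≤ ∑ k ∈ Fintype.piFinset t, ∏ i, h (k i) :=
    Finset.sum_le_sum_of_subset_of_nonneg hsub
      (fun k _ _ => Finset.prod_nonneg (fun i _ => hhnn _))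
  have step4 : ∑ k ∈ Fintype.piFinset t, ∏ i, h (k i) = ∏ i : Fin n, ∑ a ∈ t i, h a :=
    (Finset.prod_univ_sum t (fun _ a => h a)).symm
  have step5 : ∏ i : Fin n, ∑ a ∈ t i, h a ≤ (26 * ρ ^ (β - 1)) ^ n := by
    have hpp := Finset.prod_le_prod (s := (Finset.univ : Finset (Fin n)))
      (f := fun i => ∑ a ∈ t i, h a) (g := fun _ => 26 * ρ ^ (β-1))
      (fun i _ => Finset.sum_nonneg fun a _ => hhnn a)
      (fun i _ => int_sum_bound hβ1 hβ2 hρ hρ1 _)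
    simpa [Finset.prod_const, Finset.card_univ] using hpp
  have halg : A * (26 * ρ ^ (β - 1)) ^ n
      = (4:ℝ) ^ (((n:ℝ)-1)/2) * 26 ^ n * (lam / ρ) ^ (((n:ℝ) - 1) / 2) := by
    have e1 : (26 * ρ ^ (β - 1)) ^ n = 26 ^ n * ρ ^ ((β - 1) * (n:ℝ)) := by
      rw [mul_pow]
      congr 1
      rw [← Real.rpow_natCast (ρ ^ (β-1)) n, ← Real.rpow_mul hρ.le]
    have e2 : ρ * ρ ^ ((β - 1) * (n:ℝ)) = ρ ^ (-δ) := by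
      nth_rewrite 1 [← Real.rpow_one ρ]
      rw [← Real.rpow_add hρ]
      congr 1
      have : β * (n:ℝ) = δ := hβn
      rw [hδdef] at *
      nlinarith [this]
    have e3 : (lam / ρ) ^ δ = lam ^ δ * ρ ^ (-δ) := by
      rw [Real.div_rpow hlam0.le hρ.le, Real.rpow_neg hρ.le, div_eq_mul_inv]
    rw [hA, e1]
    rw [show (4:ℝ) ^ δ * (ρ * lam ^ δ) * (26 ^ n * ρ ^ ((β - 1) * (n:ℝ)))
        = (4:ℝ) ^ δ * 26 ^ n * lam ^ δ * (ρ * ρ ^ ((β - 1) * (n:ℝ))) by ring]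
    rw [e2, hδdef] at *
    rw [e3]
    ring
  calc ∑ s ∈ S, ‖K (fun i => x i + ((s:{k : Fin n → ℤ // k ≠ 0}).1 i : ℝ))‖
      ≤ A * ∑ k ∈ S', ∏ i, h (k i) := by rw [← step2]; exact step1
    _ ≤ A * (26 * ρ ^ (β - 1)) ^ n := by
        apply mul_le_mul_of_nonneg_left _ hAnn
        calc ∑ k ∈ S', ∏ i, h (k i) ≤ ∑ k ∈ Fintype.piFinset t, ∏ i, h (k i) := step3
          _ = ∏ i : Fin n, ∑ a ∈ t i, h a := step4
          _ ≤ (26 * ρ ^ (β - 1)) ^ n := step5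
    _ = (4:ℝ) ^ (((n:ℝ)-1)/2) * 26 ^ n * (lam / ρ) ^ (((n:ℝ) - 1) / 2) := halg
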